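/- Let (W, S) be a Coxeter system of type Aₙ (i.e. whose Coxeter matrix is the standard type-Aₙ Coxeter matrix, so W ≅ Sym(n+1)), with W finite and simple reflections s₁, …, sₙ. Then every cuspidal element of W is conjugate to the Coxeter element s₁s₂⋯sₙ; that is, the class of Coxeter elements is the unique cuspidal conjugacy class of W. -/

import Mathlib

/-- The reflection length of `w`: the least `n` such that `w` is a product of `n`
reflections of the Coxeter system `cs`. -/
noncomputable def CoxeterSystem.reflLength {B W : Type*} [Group W] {M : CoxeterMatrix B}
    (cs : CoxeterSystem M W) (w : W) : ℕ :=
  sInf {n : ℕ | ∃ l : List W, (∀ t ∈ l, cs.IsReflection t) ∧ l.length = n ∧ l.prod = w}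

/-- The excess `e(w) = min {ℓ(x) + ℓ(y) - ℓ(w) : w = x y, x² = y² = 1}`. -/
noncomputable def CoxeterSystem.excess {B W : Type*} [Group W] {M : CoxeterMatrix B}
    (cs : CoxeterSystem M W) (w : W) : ℕ :=
  sInf {n : ℕ | ∃ x y : W, x * x = 1 ∧ y * y = 1 ∧ w = x * y ∧
    cs.length x + cs.length y = cs.length w + n}

/-- The reflection excess
`E(w) = min {ℓ(x) + ℓ(y) - ℓ(w) : w = x y, x² = y² = 1, L(w) = L(x) + L(y)}`. -/
noncomputable def CoxeterSystem.reflExcess {B W : Type*} [Group W] {M : CoxeterMatrix B}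
    (cs : CoxeterSystem M W) (w : W) : ℕ :=
  sInf {n : ℕ | ∃ x y : W, x * x = 1 ∧ y * y = 1 ∧ w = x * y ∧
    cs.reflLength w = cs.reflLength x + cs.reflLength y ∧
    cs.length x + cs.length y = cs.length w + n}

/-- An element of `W` is *cuspidal* if its conjugacy class has empty intersection with
every proper standard parabolic subgroup `W_J`, `J ⊊ S`. -/
def CoxeterSystem.IsCuspidal {B W : Type*} [Group W] {M : CoxeterMatrix B}
    (cs : CoxeterSystem M W) (w : W) : Prop :=
  ∀ J : Set B, J ≠ Set.univ →
    ∀ v : W, IsConj w v → v ∉ Subgroup.closure (cs.simple '' J)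



open Equiv CoxeterMatrix

namespace TypeAAux

variable {α : Type*} [DecidableEq α]

lemma swap_conj (a b c d : α) :
    Equiv.swap a b * Equiv.swap c d * (Equiv.swap a b)⁻¹ =
      Equiv.swap (Equiv.swap a b c) (Equiv.swap a b d) :=
  (Equiv.swap_apply_apply (Equiv.swap a b) c d).symm

lemma swap_cube {a b c : α} (hab : a ≠ b) (hbc : b ≠ c) (hac : a ≠ c) :
    (Equiv.swap a b * Equiv.swap b c) ^ 3 = 1 := by
  have h1 : Equiv.swap a b * Equiv.swap b c * (Equiv.swap a b)⁻¹ = Equiv.swap a c := by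
    rw [swap_conj, Equiv.swap_apply_right, Equiv.swap_apply_of_ne_of_ne hac.symm hbc.symm]
  have h2 : Equiv.swap b c * Equiv.swap a b * (Equiv.swap b c)⁻¹ = Equiv.swap a c := by
    rw [swap_conj, Equiv.swap_apply_of_ne_of_ne hab hac, Equiv.swap_apply_left]
  calc (Equiv.swap a b * Equiv.swap b c) ^ 3
      = (Equiv.swap a b * Equiv.swap b c * (Equiv.swap a b)⁻¹) *
        (Equiv.swap b c * Equiv.swap a b * (Equiv.swap b c)⁻¹) := by
        rw [Equiv.swap_inv, Equiv.swap_inv]; simp only [pow_succ, pow_zero, one_mul, mul_assoc]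
    _ = 1 := by rw [h1, h2, Equiv.swap_mul_self]

lemma swap_sq {a b c d : α} (hca : c ≠ a) (hcb : c ≠ b) (hda : d ≠ a) (hdb : d ≠ b) :
    (Equiv.swap a b * Equiv.swap c d) ^ 2 = 1 := by
  have h1 : Equiv.swap a b * Equiv.swap c d * (Equiv.swap a b)⁻¹ = Equiv.swap c d := by
    rw [swap_conj, Equiv.swap_apply_of_ne_of_ne hca hcb, Equiv.swap_apply_of_ne_of_ne hda hdb]
  rw [mul_inv_eq_iff_eq_mul] at h1
  calc (Equiv.swap a b * Equiv.swap c d) ^ 2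
      = Equiv.swap a b * ((Equiv.swap c d * Equiv.swap a b) * Equiv.swap c d) := by
        simp only [pow_succ, pow_zero, one_mul, mul_assoc]
    _ = Equiv.swap a b * ((Equiv.swap a b * Equiv.swap c d) * Equiv.swap c d) := by rw [← h1]
    _ = (Equiv.swap a b * Equiv.swap a b) * (Equiv.swap c d * Equiv.swap c d) := by
        simp only [mul_assoc]
    _ = 1 := by rw [Equiv.swap_mul_self, Equiv.swap_mul_self, one_mul]

lemma An_apply (n : ℕ) (i j : Fin n) :
    Aₙ n i j = if i = j then 1 else (if (j : ℕ) + 1 = i ∨ (i : ℕ) + 1 = j then 3 else 2) := rfl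

lemma An_eq_three {n : ℕ} {i j : Fin n} (h : (j : ℕ) + 1 = i ∨ (i : ℕ) + 1 = j) :
    Aₙ n i j = 3 := by
  have hij : i ≠ j := by
    intro he; subst he; omega
  rw [An_apply, if_neg hij, if_pos h]

lemma An_eq_two {n : ℕ} {i j : Fin n} (hij : i ≠ j)
    (h : ¬((j : ℕ) + 1 = i ∨ (i : ℕ) + 1 = j)) :
    Aₙ n i j = 2 := by
  rw [An_apply, if_neg hij, if_neg h]

lemma An_castSucc (n : ℕ) (i j : Fin n) :
    Aₙ n i j = Aₙ (n + 1) i.castSucc j.castSucc := by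
  rw [An_apply, An_apply]
  simp [Fin.castSucc_inj, Fin.coe_castSucc]

end TypeAAux

section Chunk2
open Equiv CoxeterMatrix
namespace TypeAAux

lemma fin_ne_of_val_ne {m : ℕ} {x y : Fin m} (h : (x : ℕ) ≠ (y : ℕ)) : x ≠ y :=
  fun he => h (congrArg Fin.val he)

lemma An_isLiftable (n : ℕ) :
    (Aₙ n).IsLiftable (fun i : Fin n => Equiv.swap i.castSucc i.succ) := by
  intro i j
  simp only []
  show (Equiv.swap i.castSucc i.succ * Equiv.swap j.castSucc j.succ) ^ (Aₙ n) i j = 1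
  by_cases hij : i = j
  · subst hij
    rw [(Aₙ n).diagonal i, pow_one, Equiv.swap_mul_self]
  · have hvij : (i : ℕ) ≠ (j : ℕ) := fun h => hij (Fin.ext h)
    by_cases hadj : (j : ℕ) + 1 = i ∨ (i : ℕ) + 1 = j
    · rw [An_eq_three hadj]
      rcases hadj with h | h
      · -- j + 1 = i :  swap (i, i+1) * swap (j, j+1) with j+1 = i
        have hsj : j.succ = i.castSucc := Fin.ext (by simp [h])
        rw [hsj]
        have h1 : i.succ ≠ i.castSucc := fin_ne_of_val_ne (by simp)
        have h2 : i.castSucc ≠ j.castSucc := fin_ne_of_val_ne (by simp; omega)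
        have h3 : i.succ ≠ j.castSucc := fin_ne_of_val_ne (by simp; omega)
        rw [Equiv.swap_comm i.castSucc i.succ, Equiv.swap_comm j.castSucc i.castSucc]
        exact swap_cube h1 h2 h3
      · -- i + 1 = j
        have hsi : i.succ = j.castSucc := Fin.ext (by simp [h])
        rw [hsi]
        have h1 : i.castSucc ≠ j.castSucc := fin_ne_of_val_ne (by simp; omega)
        have h2 : j.castSucc ≠ j.succ := fin_ne_of_val_ne (by simp)
        have h3 : i.castSucc ≠ j.succ := fin_ne_of_val_ne (by simp; omega)
        exact swap_cube h1 h2 h3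
    · rw [An_eq_two hij hadj]
      push_neg at hadj
      obtain ⟨h1, h2⟩ := hadj
      refine swap_sq ?_ ?_ ?_ ?_ <;> apply fin_ne_of_val_ne <;> simp <;> omega

variable {m : ℕ} {V : Type*} [Group V] (cs : CoxeterSystem (Aₙ m) V)

lemma simple_comm {i j : Fin m} (h : (i : ℕ) + 2 ≤ j ∨ (j : ℕ) + 2 ≤ i) :
    cs.simple i * cs.simple j = cs.simple j * cs.simple i := by
  have hij : i ≠ j := fin_ne_of_val_ne (by omega)
  have hM : Aₙ m i j = 2 := An_eq_two hij (by omega)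
  have h2 := cs.simple_mul_simple_pow i j
  rw [hM, pow_two] at h2
  have h3 : cs.simple i * cs.simple j = (cs.simple i * cs.simple j)⁻¹ :=
    eq_inv_of_mul_eq_one_left h2
  rw [h3, mul_inv_rev, cs.inv_simple, cs.inv_simple]

lemma simple_braid {i j : Fin m} (h : (i : ℕ) + 1 = j ∨ (j : ℕ) + 1 = i) :
    cs.simple i * cs.simple j * cs.simple i = cs.simple j * cs.simple i * cs.simple j := by
  have hM : Aₙ m i j = 3 := An_eq_three (by omega)
  have h3 := cs.simple_mul_simple_pow i j
  rw [hM] at h3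
  have key : (cs.simple i * cs.simple j * cs.simple i) *
      (cs.simple j * cs.simple i * cs.simple j) = 1 := by
    rw [show (cs.simple i * cs.simple j * cs.simple i) *
      (cs.simple j * cs.simple i * cs.simple j) = (cs.simple i * cs.simple j) ^ 3 by
        simp only [pow_succ, pow_zero, one_mul, mul_assoc]]
    exact h3
  have hinv : (cs.simple j * cs.simple i * cs.simple j)⁻¹ =
      cs.simple j * cs.simple i * cs.simple j := by
    simp [mul_inv_rev, cs.inv_simple, mul_assoc]
  have := eq_inv_of_mul_eq_one_left key
  rw [hinv] at this
  exact this

end TypeAAux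
end Chunk2

section Chunk3
open Equiv CoxeterMatrix
namespace TypeAAux

def qword (n : ℕ) (k : ℕ) : List (Fin (n+1)) :=
  (List.range (n+1-k)).map (fun j => ⟨n - j, Nat.lt_succ_of_le (Nat.sub_le n j)⟩)

lemma qword_top {n k : ℕ} (h : n+1 ≤ k) : qword n k = [] := by
  unfold qword
  rw [Nat.sub_eq_zero_of_le h]
  rfl

lemma qword_succ {n k : ℕ} (hk : k ≤ n) :
    qword n k = qword n (k+1) ++ [⟨k, by omega⟩] := by
  unfold qword
  have h1 : n+1-k = (n-k)+1 := by omega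
  have h2 : n+1-(k+1) = n-k := by omega
  rw [h1, h2, List.range_succ, List.map_append]
  congr 1
  simp only [List.map_cons, List.map_nil, List.cons.injEq, and_true]
  exact Fin.ext (by simp; omega)

variable {n : ℕ} {V : Type*} [Group V]

def qe (cs : CoxeterSystem (Aₙ (n+1)) V) (k : ℕ) : V := cs.wordProd (qword n k)

variable (cs : CoxeterSystem (Aₙ (n+1)) V)

lemma qe_top {k : ℕ} (h : n+1 ≤ k) : qe cs k = 1 := by
  rw [qe, qword_top h, CoxeterSystem.wordProd_nil]

lemma qe_succ {k : ℕ} (hk : k ≤ n) :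
    qe cs k = qe cs (k+1) * cs.simple ⟨k, by omega⟩ := by
  rw [qe, qe, qword_succ hk, CoxeterSystem.wordProd_append, CoxeterSystem.wordProd_singleton]

lemma qe_comm : ∀ d k, n+1-k ≤ d → ∀ j : Fin (n+1), (j:ℕ)+2 ≤ k →
    qe cs k * cs.simple j = cs.simple j * qe cs k := by
  intro d
  induction d with
  | zero =>
    intro k hk j hj
    rw [qe_top cs (by omega)]
    simp
  | succ d ih =>
    intro k hk j hj
    by_cases hkn : n+1 ≤ k
    · rw [qe_top cs hkn]; simp
    · push_neg at hkn
      have hk' : k ≤ n := by omega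
      rw [qe_succ cs hk']
      have hcomm : cs.simple ⟨k, by omega⟩ * cs.simple j
          = cs.simple j * cs.simple ⟨k, by omega⟩ :=
        simple_comm cs (Or.inr (by simpa using hj))
      rw [mul_assoc, hcomm, ← mul_assoc, ih (k+1) (by omega) j (by omega), mul_assoc]

lemma qe_shift : ∀ d k, n+1-k ≤ d → ∀ j : Fin (n+1), k+1 ≤ (j:ℕ) →
    qe cs k * cs.simple j = cs.simple ⟨(j:ℕ)-1, by have := j.isLt; omega⟩ * qe cs k := by
  intro d
  induction d with
  | zero =>
    intro k hk j hj
    exfalso; have := j.isLt; omega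
  | succ d ih =>
    intro k hk j hj
    have hjn := j.isLt
    have hk' : k ≤ n := by omega
    rcases Nat.lt_or_ge (k+1) (j:ℕ) with hgt | hge
    · rw [qe_succ cs hk', mul_assoc]
      have hcomm : cs.simple ⟨k, by omega⟩ * cs.simple j
          = cs.simple j * cs.simple ⟨k, by omega⟩ :=
        simple_comm cs (Or.inl (by simp; omega))
      rw [hcomm, ← mul_assoc, ih (k+1) (by omega) j (by omega), mul_assoc]
    · have hj1 : (j:ℕ) = k+1 := by omega
      have hk1 : k+1 ≤ n := by omega
      have hjj : j = (⟨k+1, Nat.lt_succ_of_le hk1⟩ : Fin (n+1)) := Fin.ext hj1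
      have hidx : (⟨(j:ℕ)-1, by have := j.isLt; omega⟩ : Fin (n+1))
          = ⟨k, Nat.lt_succ_of_le hk'⟩ := Fin.ext (by simp [hj1])
      rw [hidx, hjj, qe_succ cs hk', qe_succ cs hk1]
      have braid' : cs.simple ⟨k+1, Nat.lt_succ_of_le hk1⟩ * (cs.simple ⟨k, Nat.lt_succ_of_le hk'⟩ *
          cs.simple ⟨k+1, Nat.lt_succ_of_le hk1⟩) = cs.simple ⟨k, Nat.lt_succ_of_le hk'⟩ *
          (cs.simple ⟨k+1, Nat.lt_succ_of_le hk1⟩ * cs.simple ⟨k, Nat.lt_succ_of_le hk'⟩) := by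
        have := simple_braid cs (i := ⟨k+1, Nat.lt_succ_of_le hk1⟩)
          (j := ⟨k, Nat.lt_succ_of_le hk'⟩) (Or.inr (by simp))
        simpa only [mul_assoc] using this
      have hcm := qe_comm cs (n+1) (k+2) (by omega) ⟨k, Nat.lt_succ_of_le hk'⟩ (by simp)
      simp only [mul_assoc]
      rw [braid', ← mul_assoc, hcm, mul_assoc]

lemma An_cover (v : V) :
    ∃ x : V, x ∈ Subgroup.closure (Set.range (fun i : Fin n => cs.simple i.castSucc)) ∧
      ∃ k, k ≤ n+1 ∧ v = x * qe cs k := by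
  refine CoxeterSystem.simple_induction_right cs
    (p := fun v => ∃ x : V, x ∈ Subgroup.closure
      (Set.range (fun i : Fin n => cs.simple i.castSucc)) ∧
      ∃ k, k ≤ n+1 ∧ v = x * qe cs k) v ?_ ?_
  · exact ⟨1, one_mem _, n+1, le_refl _, by rw [qe_top cs (le_refl _), one_mul]⟩
  · rintro w j ⟨x, hx, k, hk, rfl⟩
    by_cases h1 : (j:ℕ)+2 ≤ k
    · have hq := qe_comm cs (n+1) k (by omega) j h1
      have hjlt : (j:ℕ) < n := by omega
      refine ⟨x * cs.simple j, mul_mem hx (Subgroup.subset_closure ⟨⟨(j:ℕ), hjlt⟩,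
        congrArg cs.simple (by ext; simp)⟩), k, hk, by rw [mul_assoc, hq, ← mul_assoc]⟩
    · by_cases h2 : (j:ℕ)+1 = k
      · obtain ⟨k', rfl⟩ : ∃ k', k = k'+1 := ⟨k-1, by omega⟩
        have hjeq : j = (⟨k', by omega⟩ : Fin (n+1)) := Fin.ext (by simp; omega)
        refine ⟨x, hx, k', by omega, ?_⟩
        rw [mul_assoc, hjeq, ← qe_succ cs (by omega)]
      · by_cases h3 : (j:ℕ) = k
        · have hkn : k ≤ n := by have := j.isLt; omega
          have hjeq : j = (⟨k, by omega⟩ : Fin (n+1)) := Fin.ext h3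
          refine ⟨x, hx, k+1, by omega, ?_⟩
          rw [mul_assoc, qe_succ cs hkn, hjeq, mul_assoc,
            cs.simple_mul_simple_self, mul_one]
        · have h4 : k+1 ≤ (j:ℕ) := by omega
          have hq := qe_shift cs (n+1) k (by omega) j h4
          have hlt : (j:ℕ)-1 < n := by have := j.isLt; omega
          refine ⟨x * cs.simple ⟨(j:ℕ)-1, by omega⟩,
            mul_mem hx (Subgroup.subset_closure ⟨⟨(j:ℕ)-1, hlt⟩,
              congrArg cs.simple (by ext; simp)⟩), k, hk,
            by rw [mul_assoc, hq, ← mul_assoc]⟩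

lemma An_aux : ∀ nn : ℕ, Finite ((Aₙ nn).Group) ∧ Nat.card ((Aₙ nn).Group) ≤ (nn+1).factorial := by
  intro nn
  induction nn with
  | zero =>
    set cs0 := (Aₙ 0).toCoxeterSystem with hcs0
    have hall : ∀ v : (Aₙ 0).Group, v = 1 := by
      intro v
      have h1 : Submonoid.closure (Set.range cs0.simple) = ⊤ :=
        cs0.submonoid_closure_range_simple
      rw [Set.range_eq_empty, Submonoid.closure_empty] at h1
      have hv : v ∈ (⊥ : Submonoid ((Aₙ 0).Group)) := by rw [h1]; trivial
      exact hv
    have hsurj : Function.Surjective (fun _ : Unit => (1 : (Aₙ 0).Group)) :=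
      fun v => ⟨(), (hall v).symm⟩
    refine ⟨Finite.of_surjective _ hsurj, ?_⟩
    have h2 : Nat.card ((Aₙ 0).Group) ≤ 1 := by
      have h3 := Nat.card_le_card_of_surjective _ hsurj
      simpa [Nat.card_eq_fintype_card] using h3
    exact le_trans h2 (Nat.factorial_pos _)
  | succ nn ih =>
    obtain ⟨hfin, hcard⟩ := ih
    haveI := hfin
    set cs := (Aₙ (nn+1)).toCoxeterSystem with hcsdef
    set cs' := (Aₙ nn).toCoxeterSystem with hcs'def
    have hlift : (Aₙ nn).IsLiftable (fun i : Fin nn => cs.simple i.castSucc) := by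
      intro i j
      rw [An_castSucc]
      exact cs.simple_mul_simple_pow _ _
    set f : (Aₙ nn).Group →* (Aₙ (nn+1)).Group := cs'.lift ⟨_, hlift⟩ with hf
    have hfs : ∀ i, f (cs'.simple i) = cs.simple i.castSucc :=
      fun i => cs'.lift_apply_simple hlift i
    set H := Subgroup.closure (Set.range (fun i : Fin nn => cs.simple i.castSucc)) with hH
    have hrange : f.range = H := by
      rw [MonoidHom.range_eq_map, ← cs'.subgroup_closure_range_simple, MonoidHom.map_closure, hH]
      congr 1
      rw [← Set.range_comp]
      exact congrArg Set.range (funext hfs)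
    have hfin' : Finite f.range := (Set.finite_range ⇑f).to_subtype
    have hcardH : Nat.card H ≤ (nn+1).factorial := by
      rw [← hrange]
      exact le_trans (Nat.card_le_card_of_surjective _ f.rangeRestrict_surjective) hcard
    haveI : Finite H := hrange ▸ hfin'
    have hsurj : Function.Surjective
        (fun p : H × Fin (nn+2) => (p.1 : (Aₙ (nn+1)).Group) * qe cs (p.2 : ℕ)) := by
      intro v
      obtain ⟨x, hx, k, hk, hv⟩ := An_cover cs v
      exact ⟨(⟨x, hx⟩, ⟨k, by omega⟩), hv.symm⟩
    refine ⟨Finite.of_surjective _ hsurj, ?_⟩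
    calc Nat.card ((Aₙ (nn+1)).Group) ≤ Nat.card (H × Fin (nn+2)) :=
        Nat.card_le_card_of_surjective _ hsurj
      _ = Nat.card H * (nn+2) := by
        rw [Nat.card_prod, Nat.card_eq_fintype_card (α := Fin (nn+2)), Fintype.card_fin]
      _ ≤ (nn+1).factorial * (nn+2) := Nat.mul_le_mul_right _ hcardH
      _ = (nn+1+1).factorial := by
        conv_rhs => rw [Nat.factorial_succ]
        ring
        

lemma An_card_le {m : ℕ} {W : Type*} [Group W] (cs : CoxeterSystem (Aₙ m) W) :
    Nat.card W ≤ (m+1).factorial := by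
  calc Nat.card W = Nat.card ((Aₙ m).Group) := Nat.card_congr cs.mulEquiv.toEquiv
    _ ≤ (m+1).factorial := (An_aux m).2

end TypeAAux
end Chunk3

section Chunk4
open Equiv CoxeterMatrix
namespace TypeAAux

lemma prod_swap_take (n : ℕ) :
    ∀ m (hm : m ≤ n) (x : Fin (n+1)),
    (((List.finRange n).map (fun i : Fin n => Equiv.swap i.castSucc i.succ)).take m).prod x
      = if h : (x:ℕ) < m then ⟨(x:ℕ)+1, Nat.succ_lt_succ (lt_of_lt_of_le h hm)⟩
        else if (x:ℕ) = m then ⟨0, Nat.succ_pos n⟩ else x := by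
  intro m
  induction m with
  | zero =>
    intro _ x
    rw [List.take_zero, List.prod_nil, dif_neg (by omega)]
    split_ifs with h2
    · exact Fin.ext h2
    · rfl
  | succ m ih =>
    intro hm x
    have hm' : m ≤ n := by omega
    have hmn : m < n := by omega
    have hlen : m < (((List.finRange n).map
        (fun i : Fin n => Equiv.swap i.castSucc i.succ))).length := by simp [hmn]
    rw [List.prod_take_succ _ m hlen, Equiv.Perm.mul_apply]
    have hget : ((List.finRange n).map
          (fun i : Fin n => Equiv.swap i.castSucc i.succ))[m]'hlen
        = Equiv.swap (⟨m, Nat.lt_succ_of_le hm'⟩ : Fin (n+1)) ⟨m+1, Nat.succ_lt_succ hmn⟩ := by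
      simp only [List.getElem_map, List.getElem_finRange]
      congr 1 <;> exact Fin.ext (by simp)
    rw [hget]
    by_cases h1 : (x:ℕ) = m
    · have hs : Equiv.swap (⟨m, Nat.lt_succ_of_le hm'⟩ : Fin (n+1)) ⟨m+1, Nat.succ_lt_succ hmn⟩ x
          = ⟨m+1, Nat.succ_lt_succ hmn⟩ := by
        rw [show x = (⟨m, Nat.lt_succ_of_le hm'⟩ : Fin (n+1)) from Fin.ext h1,
          Equiv.swap_apply_left]
      rw [hs, ih hm']
      rw [dif_neg (by simp only [Fin.val_mk]; omega), if_neg (by simp only [Fin.val_mk]; omega),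
        dif_pos (by omega)]
      exact Fin.ext (by simp only [Fin.val_mk]; omega)
    · by_cases h2 : (x:ℕ) = m+1
      · have hs : Equiv.swap (⟨m, Nat.lt_succ_of_le hm'⟩ : Fin (n+1))
            ⟨m+1, Nat.succ_lt_succ hmn⟩ x = ⟨m, Nat.lt_succ_of_le hm'⟩ := by
          rw [show x = (⟨m+1, Nat.succ_lt_succ hmn⟩ : Fin (n+1)) from Fin.ext h2,
            Equiv.swap_apply_right]
        rw [hs, ih hm']
        rw [dif_neg (by simp only [Fin.val_mk]; omega), if_pos (by simp only [Fin.val_mk]),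
          dif_neg (by omega), if_pos h2]
      · have hs : Equiv.swap (⟨m, Nat.lt_succ_of_le hm'⟩ : Fin (n+1))
            ⟨m+1, Nat.succ_lt_succ hmn⟩ x = x := by
          apply Equiv.swap_apply_of_ne_of_ne
          · exact fun h => h1 (by rw [h])
          · exact fun h => h2 (by rw [h])
        rw [hs, ih hm']
        by_cases h3 : (x:ℕ) < m
        · rw [dif_pos h3, dif_pos (by omega)]
        · rw [dif_neg h3, if_neg h1, dif_neg (by omega), if_neg h2]

lemma prod_swap_eq_finRotate (n : ℕ) :
    ((List.finRange n).map (fun i : Fin n => Equiv.swap i.castSucc i.succ)).prod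
      = finRotate (n+1) := by
  have hlen : ((List.finRange n).map
      (fun i : Fin n => Equiv.swap i.castSucc i.succ)).length = n := by simp
  have htake := List.take_of_length_le (le_of_eq hlen)
  apply Equiv.ext
  intro x
  rw [← htake, prod_swap_take n n (le_refl n) x]
  refine Fin.ext ?_
  rw [coe_finRotate]
  by_cases h1 : (x:ℕ) < n
  · rw [dif_pos h1, if_neg (fun h => by rw [h, Fin.val_last] at h1; omega)]
  · have hx : (x:ℕ) = n := by have := x.isLt; omega
    rw [dif_neg h1, if_pos hx, if_pos (Fin.ext (by simp [hx, Fin.val_last]))]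

def permCongrHom {α β : Type*} (e : α ≃ β) : Equiv.Perm α →* Equiv.Perm β where
  toFun := fun ρ => e.permCongr ρ
  map_one' := by ext x; simp
  map_mul' := fun a b => by
    ext x
    simp [Equiv.permCongr_apply, Equiv.Perm.mul_apply]

lemma permCongr_swap {α β : Type*} [DecidableEq α] [DecidableEq β] (e : α ≃ β) (a b : α) :
    e.permCongr (Equiv.swap a b) = Equiv.swap (e a) (e b) := by
  ext x
  rw [Equiv.permCongr_apply]
  by_cases h1 : x = e a
  · simp [h1]
  · by_cases h2 : x = e b
    · simp [h2]
    · rw [Equiv.swap_apply_of_ne_of_ne h1 h2,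
        Equiv.swap_apply_of_ne_of_ne (fun h => h1 ((Equiv.symm_apply_eq e).mp h))
          (fun h => h2 ((Equiv.symm_apply_eq e).mp h)),
        Equiv.apply_symm_apply]

lemma ofSubtype_mem_closure {N : ℕ} (p : Fin N → Prop) [DecidablePred p] (m : ℕ)
    (em : Fin (m+1) ≃ {x : Fin N // p x}) (S : Set (Equiv.Perm (Fin N)))
    (hS : ∀ i : Fin m, Equiv.swap ((em i.castSucc : {x : Fin N // p x}) : Fin N)
      ((em i.succ : {x : Fin N // p x}) : Fin N) ∈ S)
    (τ : Equiv.Perm {x : Fin N // p x}) :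
    Equiv.Perm.ofSubtype τ ∈ Subgroup.closure S := by
  set Ψ : Equiv.Perm (Fin (m+1)) →* Equiv.Perm (Fin N) :=
    (Equiv.Perm.ofSubtype).comp (permCongrHom em) with hΨ
  have hτ : Equiv.Perm.ofSubtype τ = Ψ (em.permCongr.symm τ) := by
    have : em.permCongr (em.permCongr.symm τ) = τ := em.permCongr.apply_symm_apply τ
    simp only [hΨ, MonoidHom.comp_apply]
    rw [show (permCongrHom em) (em.permCongr.symm τ) = em.permCongr (em.permCongr.symm τ) from rfl,
      this]
  rw [hτ]
  have hmem : em.permCongr.symm τ ∈ Submonoid.closure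
      (Set.range fun i : Fin m => Equiv.swap i.castSucc i.succ) := by
    rw [Equiv.Perm.mclosure_swap_castSucc_succ]; trivial
  refine Submonoid.closure_induction ?_ ?_ ?_ hmem
  · rintro _ ⟨i, rfl⟩
    have : Ψ (Equiv.swap i.castSucc i.succ)
        = Equiv.swap ((em i.castSucc : {x : Fin N // p x}) : Fin N)
          ((em i.succ : {x : Fin N // p x}) : Fin N) := by
      simp only [hΨ, MonoidHom.comp_apply]
      rw [show (permCongrHom em) (Equiv.swap i.castSucc i.succ)
          = em.permCongr (Equiv.swap i.castSucc i.succ) from rfl,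
        permCongr_swap, Equiv.Perm.ofSubtype_swap_eq]
    rw [this]
    exact Subgroup.subset_closure (hS i)
  · rw [map_one]; exact one_mem _
  · intro x y _ _ hx hy
    rw [map_mul]; exact mul_mem hx hy

end TypeAAux
end Chunk4

section Chunk5
open Equiv CoxeterMatrix
namespace TypeAAux

lemma exists_invariant_finset {n : ℕ} (hn : 1 ≤ n) (σ : Equiv.Perm (Fin (n+1)))
    (hct : σ.cycleType ≠ {n+1}) :
    ∃ A : Finset (Fin (n+1)), (∀ x, σ x ∈ A ↔ x ∈ A) ∧ 1 ≤ A.card ∧ A.card ≤ n := by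
  classical
  by_cases hσ : σ = 1
  · refine ⟨{0}, ?_, by simp, by simp; omega⟩
    intro x; simp [hσ]
  · have hne : σ.support ≠ ∅ := fun h => hσ (Equiv.Perm.support_eq_empty_iff.mp h)
    obtain ⟨a, ha⟩ := Finset.nonempty_of_ne_empty hne
    refine ⟨(σ.cycleOf a).support, ?_, ?_, ?_⟩
    · intro x
      simp only [Equiv.Perm.mem_support_cycleOf_iff]
      rw [Equiv.Perm.sameCycle_apply_right]
    · refine Finset.card_pos.mpr ⟨a, ?_⟩
      rw [Equiv.Perm.mem_support_cycleOf_iff]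
      exact ⟨Equiv.Perm.SameCycle.refl _ _, ha⟩
    · by_contra hle
      push_neg at hle
      have hcard : (σ.cycleOf a).support.card = n+1 := by
        have h1 : (σ.cycleOf a).support.card ≤ n+1 := by
          have := Finset.card_le_univ (σ.cycleOf a).support
          simpa using this
        omega
      have huniv : (σ.cycleOf a).support = Finset.univ :=
        Finset.eq_univ_of_card _ (by simpa using hcard)
      have hcyc : σ.IsCycle := by
        refine ⟨a, Equiv.Perm.mem_support.mp ha, fun y _ => ?_⟩
        have hy : y ∈ (σ.cycleOf a).support := by rw [huniv]; exact Finset.mem_univ y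
        exact ((Equiv.Perm.mem_support_cycleOf_iff).mp hy).1
      have hsupp : σ.support = Finset.univ :=
        Finset.eq_univ_iff_forall.mpr fun y =>
          Equiv.Perm.support_cycleOf_le σ a (by rw [huniv]; exact Finset.mem_univ y)
      apply hct
      rw [hcyc.cycleType, hsupp]
      simp

lemma preserve_mem_closure {n k : ℕ} (hk1 : 1 ≤ k) (hk2 : k ≤ n)
    (τ : Equiv.Perm (Fin (n+1)))
    (hpres : ∀ x : Fin (n+1), ((τ x : ℕ) < k ↔ (x : ℕ) < k)) :
    τ ∈ Subgroup.closure
      ((fun i : Fin n => Equiv.swap i.castSucc i.succ) '' {i : Fin n | (i:ℕ) ≠ k-1}) := by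
  classical
  set p : Fin (n+1) → Prop := fun x => (x:ℕ) < k with hp
  have hpres' : ∀ x, p (τ x) ↔ p x := hpres
  let ek : Fin k ≃ {x : Fin (n+1) // p x} :=
    { toFun := fun j => ⟨⟨(j:ℕ), by have := j.isLt; omega⟩, by
        show ((⟨(j:ℕ), _⟩ : Fin (n+1)) : ℕ) < k
        exact j.isLt⟩
      invFun := fun x => ⟨((x : Fin (n+1)) : ℕ), x.2⟩
      left_inv := fun j => rfl
      right_inv := fun x => rfl }
  let ek2 : Fin (n+1-k) ≃ {x : Fin (n+1) // ¬ p x} :=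
    { toFun := fun j => ⟨⟨k + (j:ℕ), by have := j.isLt; omega⟩, by
        show ¬ ((⟨k + (j:ℕ), _⟩ : Fin (n+1)) : ℕ) < k
        simp⟩
      invFun := fun x => ⟨((x : Fin (n+1)) : ℕ) - k, by
        have h1 := (x : Fin (n+1)).isLt
        have h2 : ¬ ((x : Fin (n+1)) : ℕ) < k := x.2
        omega⟩
      left_inv := fun j => by
        apply Fin.ext
        simp
      right_inv := fun x => by
        apply Subtype.ext
        apply Fin.ext
        have h2 : ¬ ((x : Fin (n+1)) : ℕ) < k := x.2
        simp only [Fin.val_mk]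
        omega }
  set τ₁ : Equiv.Perm {x : Fin (n+1) // p x} :=
    τ.subtypePerm (fun x => hpres' x) with hτ₁
  set τ₂ : Equiv.Perm {x : Fin (n+1) // ¬ p x} :=
    τ.subtypePerm (fun x => not_congr (hpres' x)) with hτ₂
  have hdec : τ = Equiv.Perm.ofSubtype τ₁ * Equiv.Perm.ofSubtype τ₂ := by
    apply Equiv.ext
    intro x
    rw [Equiv.Perm.mul_apply]
    by_cases hx : p x
    · rw [Equiv.Perm.ofSubtype_apply_of_not_mem τ₂ (not_not_intro hx),
        Equiv.Perm.ofSubtype_apply_of_mem τ₁ hx]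
      rfl
    · rw [Equiv.Perm.ofSubtype_apply_of_mem τ₂ hx,
        Equiv.Perm.ofSubtype_apply_of_not_mem τ₁ (by
          show ¬ p _
          rw [show ((τ₂ ⟨x, hx⟩ : {x // ¬ p x}) : Fin (n+1))
            = τ x from rfl]
          rw [hpres']
          exact hx)]
      rfl
  rw [hdec]
  set S : Set (Equiv.Perm (Fin (n+1))) :=
    (fun i : Fin n => Equiv.swap i.castSucc i.succ) '' {i : Fin n | (i:ℕ) ≠ k-1} with hS
  obtain ⟨k', rfl⟩ : ∃ k', k = k'+1 := ⟨k-1, by omega⟩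
  have hm1 : Equiv.Perm.ofSubtype τ₁ ∈ Subgroup.closure S := by
    refine ofSubtype_mem_closure p k' ek S ?_ τ₁
    intro i
    have hiv : (i:ℕ) < k' := i.isLt
    have hlt : (i:ℕ) < n := by omega
    refine ⟨⟨(i:ℕ), hlt⟩, by simp; omega, ?_⟩
    have h1 : ((ek i.castSucc : {x : Fin (n+1) // p x}) : Fin (n+1))
        = (⟨(i:ℕ), hlt⟩ : Fin n).castSucc := Fin.ext (by simp [ek]; try omega)
    have h2 : ((ek i.succ : {x : Fin (n+1) // p x}) : Fin (n+1))
        = (⟨(i:ℕ), hlt⟩ : Fin n).succ := Fin.ext (by simp [ek]; try omega)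
    rw [h1, h2]
  have hm2 : Equiv.Perm.ofSubtype τ₂ ∈ Subgroup.closure S := by
    have hcast : (n-(k'+1))+1 = n+1-(k'+1) := by omega
    let em2 : Fin ((n-(k'+1))+1) ≃ {x : Fin (n+1) // ¬ p x} :=
      (finCongr hcast).trans ek2
    refine ofSubtype_mem_closure (fun x => ¬ p x) (n-(k'+1)) em2 S ?_ τ₂
    intro i
    have hiv : (i:ℕ) < n-(k'+1) := i.isLt
    have hlt : (k'+1) + (i:ℕ) < n := by omega
    refine ⟨⟨(k'+1) + (i:ℕ), hlt⟩, by simp; omega, ?_⟩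
    have h1 : ((em2 i.castSucc : {x : Fin (n+1) // ¬ p x}) : Fin (n+1))
        = (⟨(k'+1) + (i:ℕ), hlt⟩ : Fin n).castSucc := Fin.ext (by simp [em2, ek2]; try omega)
    have h2 : ((em2 i.succ : {x : Fin (n+1) // ¬ p x}) : Fin (n+1))
        = (⟨(k'+1) + (i:ℕ), hlt⟩ : Fin n).succ := Fin.ext (by simp [em2, ek2]; try omega)
    rw [h1, h2]
  exact mul_mem hm1 hm2

lemma not_fullcycle_conj_parabolic {n : ℕ} (hn : 1 ≤ n) (σ : Equiv.Perm (Fin (n+1)))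
    (hct : σ.cycleType ≠ {n+1}) :
    ∃ k : ℕ, 1 ≤ k ∧ k ≤ n ∧ ∃ τ : Equiv.Perm (Fin (n+1)), IsConj σ τ ∧
      τ ∈ Subgroup.closure
        ((fun i : Fin n => Equiv.swap i.castSucc i.succ) '' {i : Fin n | (i:ℕ) ≠ k-1}) := by
  classical
  obtain ⟨A, hA, hc1, hc2⟩ := exists_invariant_finset hn σ hct
  refine ⟨A.card, hc1, hc2, ?_⟩
  have hcardp : Fintype.card {x : Fin (n+1) // (x:ℕ) < A.card} = A.card := by
    have e : {x : Fin (n+1) // (x:ℕ) < A.card} ≃ Fin A.card :=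
      { toFun := fun x => ⟨((x : Fin (n+1)) : ℕ), x.2⟩
        invFun := fun j => ⟨⟨(j:ℕ), by have := j.isLt; have := hc2; omega⟩, j.isLt⟩
        left_inv := fun x => rfl
        right_inv := fun j => rfl }
    rw [Fintype.card_congr e, Fintype.card_fin]
  have hcardA : Fintype.card {x : Fin (n+1) // x ∈ A} = A.card := Fintype.card_coe A
  let e1 : {x : Fin (n+1) // x ∈ A} ≃ {x : Fin (n+1) // (x:ℕ) < A.card} :=
    Fintype.equivOfCardEq (by rw [hcardp, hcardA])
  let e2 : {x : Fin (n+1) // ¬ x ∈ A} ≃ {x : Fin (n+1) // ¬ (x:ℕ) < A.card} :=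
    Fintype.equivOfCardEq (by
      rw [Fintype.card_subtype_compl, Fintype.card_subtype_compl, hcardp, hcardA])
  let g : Equiv.Perm (Fin (n+1)) :=
    ((Equiv.sumCompl (· ∈ A)).symm.trans ((e1.sumCongr e2).trans
      (Equiv.sumCompl (fun x : Fin (n+1) => (x:ℕ) < A.card))))
  have hg : ∀ x : Fin (n+1), ((g x : ℕ) < A.card) ↔ x ∈ A := by
    intro x
    by_cases hx : x ∈ A
    · have hgx : g x = ↑(e1 ⟨x, hx⟩) := by
        simp only [g, Equiv.trans_apply, Equiv.sumCompl_symm_apply_of_pos hx,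
          Equiv.sumCongr_apply, Sum.map_inl, Equiv.sumCompl_apply_inl]
      rw [hgx]
      exact iff_of_true (e1 ⟨x, hx⟩).2 hx
    · have hgx : g x = ↑(e2 ⟨x, hx⟩) := by
        simp only [g, Equiv.trans_apply, Equiv.sumCompl_symm_apply_of_neg hx,
          Equiv.sumCongr_apply, Sum.map_inr, Equiv.sumCompl_apply_inr]
      rw [hgx]
      exact iff_of_false (e2 ⟨x, hx⟩).2 hx
  refine ⟨g * σ * g⁻¹, isConj_iff.mpr ⟨g, rfl⟩, ?_⟩
  refine preserve_mem_closure hc1 hc2 _ ?_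
  intro x
  have h1 : (g * σ * g⁻¹) x = g (σ (g⁻¹ x)) := rfl
  rw [h1, hg, hA, ← hg, show g (g⁻¹ x) = x from Equiv.apply_symm_apply g x]

end TypeAAux
end Chunk5


section MainTheorem
/-- In a finite Coxeter group of type `Aₙ`, every cuspidal element is conjugate to the
Coxeter element `s₁ s₂ ⋯ sₙ`; i.e. the class of Coxeter elements is the unique cuspidal
conjugacy class. -/
theorem typeA_cuspidal_isConj_coxeterElement
    (n : ℕ) {W : Type*} [Group W] [Finite W]
    (cs : CoxeterSystem (CoxeterMatrix.Aₙ n) W) (w : W) (hc : cs.IsCuspidal w) :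
    IsConj w ((List.finRange n).map cs.simple).prod := by
  classical
  have hlift := TypeAAux.An_isLiftable n
  set φ : W →* Equiv.Perm (Fin (n+1)) := cs.lift ⟨_, hlift⟩ with hφ
  have hφs : ∀ i, φ (cs.simple i) = Equiv.swap i.castSucc i.succ :=
    fun i => cs.lift_apply_simple hlift i
  have hsurj : Function.Surjective φ := by
    have hle : (⊤ : Subgroup (Equiv.Perm (Fin (n+1)))) ≤ φ.range := by
      rw [← Subgroup.closure_eq_top_of_mclosure_eq_top
        (Equiv.Perm.mclosure_swap_castSucc_succ n), Subgroup.closure_le]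
      rintro x ⟨i, rfl⟩
      exact ⟨cs.simple i, hφs i⟩
    intro x
    exact hle (Subgroup.mem_top x)
  have hcard2 : Nat.card (Equiv.Perm (Fin (n+1))) = (n+1).factorial := by
    rw [Nat.card_eq_fintype_card, Fintype.card_perm, Fintype.card_fin]
  have hbij : Function.Bijective φ := by
    refine (Nat.bijective_iff_surjective_and_card φ).mpr ⟨hsurj, le_antisymm ?_ ?_⟩
    · rw [hcard2]; exact TypeAAux.An_card_le cs
    · exact Nat.card_le_card_of_surjective φ hsurj
  set e : W ≃* Equiv.Perm (Fin (n+1)) := MulEquiv.ofBijective φ hbij with he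
  have heapp : ∀ v : W, e v = φ v := fun v => rfl
  have hecox : e (((List.finRange n).map cs.simple).prod) = finRotate (n+1) := by
    rw [heapp, map_list_prod, List.map_map,
      show (⇑φ ∘ cs.simple) = (fun i : Fin n => Equiv.swap i.castSucc i.succ) from funext hφs,
      TypeAAux.prod_swap_eq_finRotate]
  rcases Nat.eq_zero_or_pos n with hn0 | hn1
  · subst hn0
    haveI : Subsingleton (Equiv.Perm (Fin 1)) :=
      ⟨fun a b => Equiv.ext fun x => Subsingleton.elim _ _⟩
    haveI : Subsingleton W := ⟨fun a b => hbij.1 (Subsingleton.elim _ _)⟩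
    rw [Subsingleton.elim w (((List.finRange 0).map cs.simple).prod)]
  · by_cases hct : (φ w).cycleType = {n+1}
    · obtain ⟨m, rfl⟩ : ∃ m, n = m+1 := ⟨n-1, by omega⟩
      have hfc : (finRotate (m+1+1)).cycleType = {m+1+1} := by
        simpa using Equiv.Perm.cycleType_finRotate (n := m)
      have hconjP : IsConj (φ w) (finRotate (m+1+1)) :=
        Equiv.Perm.isConj_of_cycleType_eq (by rw [hct, hfc])
      have h1 : e.symm (φ w) = w := by rw [← heapp, MulEquiv.symm_apply_apply]
      have h2 : e.symm (finRotate (m+1+1)) = ((List.finRange (m+1)).map cs.simple).prod := by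
        rw [← hecox, MulEquiv.symm_apply_apply]
      have h3 := MonoidHom.map_isConj e.symm.toMonoidHom hconjP
      rwa [show e.symm.toMonoidHom (φ w) = e.symm (φ w) from rfl,
        show e.symm.toMonoidHom (finRotate (m+1+1)) = e.symm (finRotate (m+1+1)) from rfl,
        h1, h2] at h3
    · obtain ⟨k, hk1, hk2, τ, hconjP, hmem⟩ :=
        TypeAAux.not_fullcycle_conj_parabolic hn1 (φ w) hct
      set J : Set (Fin n) := {i : Fin n | (i:ℕ) ≠ k-1} with hJ
      have hJne : J ≠ Set.univ := by
        intro h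
        have h2 : (⟨k-1, by omega⟩ : Fin n) ∈ J := h ▸ Set.mem_univ _
        simp [hJ] at h2
      have himg : (fun i : Fin n => Equiv.swap i.castSucc i.succ) '' J
          = ⇑e '' (cs.simple '' J) := by
        rw [← Set.image_comp]
        apply Set.image_congr
        intro i _
        show Equiv.swap i.castSucc i.succ = e (cs.simple i)
        rw [heapp]
        exact (hφs i).symm
      have hv : e.symm τ ∈ Subgroup.closure (cs.simple '' J) := by
        have hmem2 : τ ∈ Subgroup.closure (⇑e '' (cs.simple '' J)) := by
          rw [← himg]; exact hmem
        have hmap : (Subgroup.closure (cs.simple '' J)).map e.toMonoidHom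
            = Subgroup.closure (⇑e '' (cs.simple '' J)) := by
          rw [MonoidHom.map_closure]
          rfl
        rw [← hmap] at hmem2
        obtain ⟨u, hu, hue⟩ := Subgroup.mem_map.mp hmem2
        have hueq : e.symm τ = u := by
          rw [show e.toMonoidHom u = e u from rfl] at hue
          rw [← hue, MulEquiv.symm_apply_apply]
        rw [hueq]
        exact hu
      have hwconj : IsConj w (e.symm τ) := by
        have h3 := MonoidHom.map_isConj e.symm.toMonoidHom hconjP
        have h1 : e.symm (φ w) = w := by rw [← heapp, MulEquiv.symm_apply_apply]
        rwa [show e.symm.toMonoidHom (φ w) = e.symm (φ w) from rfl, h1] at h3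
      exact absurd hv (hc J hJne (e.symm τ) hwconj)
end MainTheorem
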